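/- arXiv:1302.0041 — 2 statements merged into one kernel-verified Lean document; each statement's English description precedes it below -/
import Mathlib

section
/- Let (k[ΔX], d) be the free commutative differential algebra of weight λ on a set X. For any differential algebra (R, δ) of weight λ and any set map φ : X → R, there exists a unique differential algebra homomorphism φ̃ : k[ΔX] → R with φ̃(x) = φ(x) for all x ∈ X. -/
open MvPolynomial

/-- Universal property of the free commutative differential algebra of weight `λ`. -/
theorem free_differential_algebra_universal
    {k X R : Type*} [CommRing k] [CommRing R] [Algebra k R] (lam : k)
    (d : MvPolynomial (X × ℕ) k →ₗ[k] MvPolynomial (X × ℕ) k)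
    (hdX : ∀ (x : X) (n : ℕ), d (MvPolynomial.X (x, n)) = MvPolynomial.X (x, n + 1))
    (hd1 : d 1 = 0)
    (hdleib : ∀ f g : MvPolynomial (X × ℕ) k,
      d (f * g) = d f * g + f * d g + lam • (d f * d g))
    (δ : R →ₗ[k] R) (hδ1 : δ 1 = 0)
    (hδleib : ∀ u v : R, δ (u * v) = δ u * v + u * δ v + lam • (δ u * δ v))
    (φ : X → R) :
    ∃! φt : MvPolynomial (X × ℕ) k →ₐ[k] R,
      (∀ x : X, φt (MvPolynomial.X (x, 0)) = φ x) ∧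
      ∀ f : MvPolynomial (X × ℕ) k, φt (d f) = δ (φt f) := by
  set e : X × ℕ → R := fun p => δ^[p.2] (φ p.1) with he
  refine ⟨aeval e, ⟨fun x => by simp [he], ?_⟩, ?_⟩
  · -- commutation
    have hdC : ∀ a : k, d (C a) = 0 := by
      intro a
      have : (C a : MvPolynomial (X × ℕ) k) = a • 1 := by
        simp [Algebra.smul_def, algebraMap_eq]
      rw [this, map_smul, hd1, smul_zero]
    have hδalg : ∀ a : k, δ (algebraMap k R a) = 0 := by
      intro a
      have : (algebraMap k R a) = a • (1 : R) := by simp [Algebra.smul_def]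
      rw [this, map_smul, hδ1, smul_zero]
    intro f
    induction f using MvPolynomial.induction_on with
    | C a => simp [hdC a, hδalg a]
    | add p q hp hq => simp [map_add, hp, hq]
    | mul_X p i hp =>
      obtain ⟨x, n⟩ := i
      rw [hdleib, map_add, map_add, map_mul, map_mul, map_smul, map_mul, hdX,
        hp, map_mul, hδleib]
      have hX : (aeval (R := k) e) (MvPolynomial.X (x, n)) = δ^[n] (φ x) := aeval_X (R := k) e (x, n)
      have hX' : (aeval (R := k) e) (MvPolynomial.X (x, n + 1)) = δ (δ^[n] (φ x)) := by
        rw [aeval_X (R := k)]; exact Function.iterate_succ_apply' δ n (φ x)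
      rw [hX, hX']
  · -- uniqueness
    rintro ψ ⟨hψX, hψd⟩
    apply MvPolynomial.algHom_ext
    rintro ⟨x, n⟩
    have key : ∀ m : ℕ, ψ (MvPolynomial.X (x, m)) = δ^[m] (φ x) := by
      intro m
      induction m with
      | zero => simpa using hψX x
      | succ m ih =>
        rw [← hdX x m, hψd, ih, Function.iterate_succ_apply']
    simp [key n, he]
end

section
/- Let (R, d, P) be a differential Rota–Baxter algebra of weight λ (so d is a derivation of weight λ, P a Rota–Baxter operator of weight λ, and d∘P = id). Define φ(u,v) := P(d(u)P(v)) − uP(v) + P(uv) + λP(d(u)v). Then for all u, v, w ∈ R: φ(u,v)·P(w) = P(φ(u,v)·w) + φ(u, wP(v)) + φ(u, vP(w)) + λ·φ(u, vw). -/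
/-- The integro-differential relator `φ(u,v) = P(d(u)P(v)) − uP(v) + P(uv) + λP(d(u)v)`. -/
def phi {k R : Type*} [CommRing k] [CommRing R] [Algebra k R]
    (lam : k) (d P : R → R) (u v : R) : R :=
  P (d u * P v) - u * P v + P (u * v) + lam • P (d u * v)

/-- In a differential Rota–Baxter algebra of weight `λ`:
`φ(u,v)·P(w) = P(φ(u,v)·w) + φ(u, wP(v)) + φ(u, vP(w)) + λ·φ(u, vw)`. -/
theorem phi_mul_P
    {k R : Type*} [CommRing k] [CommRing R] [Algebra k R] (lam : k)
    (d P : R →ₗ[k] R)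
    (hd1 : d 1 = 0)
    (hleib : ∀ u v : R, d (u * v) = d u * v + u * d v + lam • (d u * d v))
    (hRB : ∀ u v : R, P u * P v = P (u * P v) + P (P u * v) + lam • P (u * v))
    (hdP : ∀ u : R, d (P u) = u) :
    ∀ u v w : R,
      phi lam (⇑d) (⇑P) u v * P w =
        P (phi lam (⇑d) (⇑P) u v * w) + phi lam (⇑d) (⇑P) u (w * P v) +
          phi lam (⇑d) (⇑P) u (v * P w) + lam • phi lam (⇑d) (⇑P) u (v * w) := by
  intro u v w
  have h1 := hRB (d u * P v) w
  have h2 := hRB v w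
  have h3 := hRB (u * v) w
  have h4 := hRB (d u * v) w
  have h5 : P (d u * (P v * P w)) =
      P (d u * P (v * P w)) + P (d u * P (P v * w)) + lam • P (d u * P (v * w)) := by
    rw [hRB v w]
    have : d u * (P (v * P w) + P (P v * w) + lam • P (v * w)) =
        d u * P (v * P w) + d u * P (P v * w) + lam • (d u * P (v * w)) := by
      rw [mul_add, mul_add, mul_smul_comm]
    rw [this, map_add, map_add, map_smul]
  have c4 : P (phi lam (⇑d) (⇑P) u v * w) =
      P (P (d u * P v) * w) - P (u * P v * w) + P (P (u * v) * w) +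
        lam • P (P (d u * v) * w) := by
    have hphi : phi lam (⇑d) (⇑P) u v * w =
        P (d u * P v) * w - u * (P v * w) + P (u * v) * w + lam • (P (d u * v) * w) := by
      simp only [phi, Algebra.smul_def]; ring
    rw [hphi, map_add, map_add, map_sub, map_smul, mul_assoc]
  rw [c4]
  simp only [phi, Algebra.smul_def] at *
  ring_nf at h2 h3 h4 h5 ⊢
  linear_combination (norm := ring_nf) h1 - u * h2 + h3 + (algebraMap k R lam) * h4 + h5
end
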